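/- Let k ∈ ℝ and let f : S² → ℂ be a continuous function on the unit sphere. Then the function u : ℝ³ → ℂ defined by u(r) = ∫_{S²} f(q) e^{i k ⟪q, r⟫} dσ(q) is real-analytic on all of ℝ³. Consequently, if u vanishes on a nonempty open subset of ℝ³, then u vanishes identically on ℝ³. -/

import Mathlib

/-!
Expanding `exp (L a x)` in its power series and integrating term by term gives a power series at
`0` for `x ↦ ∫ g a * exp (L a x) ∂μ` whose `n`-th coefficient has norm at most `‖g‖₁ Mⁿ / n!`,
where `M` bounds `‖L a‖`; so it converges everywhere and the integral is real-analytic on the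
whole space. For the Herglotz wave `μ` is the surface measure of `S²`, which is finite because
spherical coordinates exhibit `S²` as a Lipschitz image of a square; the vanishing statement is
then the identity theorem on the connected space `ℝ³`.
-/

open MeasureTheory Metric NormedSpace Real
open scoped Nat ENNReal RealInnerProductSpace

theorem ContinuousMultilinearMap.continuous_compContinuousLinearMap_const {𝕜 ι E F G : Type*}
    [NontriviallyNormedField 𝕜] [Fintype ι] [NormedAddCommGroup E] [NormedSpace 𝕜 E]
    [NormedAddCommGroup F] [NormedSpace 𝕜 F] [NormedAddCommGroup G] [NormedSpace 𝕜 G]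
    (g : ContinuousMultilinearMap 𝕜 (fun _ : ι => F) G) :
    Continuous fun u : E →L[𝕜] F => g.compContinuousLinearMap fun _ => u :=
  ((compContinuousLinearMapContinuousMultilinear 𝕜 (fun _ : ι => E) (fun _ => F) G).cont.comp
    (continuous_pi fun _ => continuous_id)).clm_apply (continuous_const (y := g))

section IntegralExp

variable {α E : Type*} [MeasurableSpace α] [NormedAddCommGroup E] [NormedSpace ℝ E]

theorem norm_expSeries_compContinuousLinearMap_le (ℓ : E →L[ℝ] ℂ) (n : ℕ) :
    ‖(expSeries ℝ ℂ).compContinuousLinearMap ℓ n‖ ≤ ‖ℓ‖ ^ n / n ! := by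
  refine (ContinuousMultilinearMap.norm_compContinuousLinearMap_le _ _).trans ?_
  rw [Finset.prod_const, Finset.card_univ, Fintype.card_fin, expSeries, norm_smul,
    ContinuousMultilinearMap.norm_mkPiAlgebraFin, norm_inv, RCLike.norm_natCast, mul_one,
    div_eq_inv_mul]

theorem norm_inv_factorial_smul_pow_apply_le (ℓ : E →L[ℝ] ℂ) (y : E) (n : ℕ) :
    ‖(n !⁻¹ : ℝ) • ℓ y ^ n‖ ≤ (‖ℓ‖ * ‖y‖) ^ n / n ! := by
  rw [norm_smul, norm_pow, norm_inv, RCLike.norm_natCast, inv_mul_eq_div]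
  gcongr
  exact ℓ.le_opNorm y

noncomputable def integralExpSeries (μ : Measure α) (g : α → ℂ) (L : α → E →L[ℝ] ℂ) :
    FormalMultilinearSeries ℝ E ℂ :=
  fun n => ∫ a, g a • (expSeries ℝ ℂ).compContinuousLinearMap (L a) n ∂μ

variable {μ : Measure α} {g : α → ℂ} {L : α → E →L[ℝ] ℂ} {M : ℝ}

theorem integrable_smul_expSeries_compContinuousLinearMap (hg : Integrable g μ)
    (hL : AEStronglyMeasurable L μ) (hLM : ∀ᵐ a ∂μ, ‖L a‖ ≤ M) (n : ℕ) :
    Integrable (fun a => g a • (expSeries ℝ ℂ).compContinuousLinearMap (L a) n) μ :=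
  hg.smul_bdd (M ^ n / n !)
    (((expSeries ℝ ℂ n).continuous_compContinuousLinearMap_const).comp_aestronglyMeasurable hL)
    (hLM.mono fun a ha => (norm_expSeries_compContinuousLinearMap_le (L a) n).trans (by gcongr))

theorem integralExpSeries_apply (hg : Integrable g μ) (hL : AEStronglyMeasurable L μ)
    (hLM : ∀ᵐ a ∂μ, ‖L a‖ ≤ M) (n : ℕ) (y : E) :
    integralExpSeries μ g L n (fun _ => y) = ∫ a, g a * ((n !⁻¹ : ℝ) • L a y ^ n) ∂μ := by
  change (∫ a, g a • (expSeries ℝ ℂ).compContinuousLinearMap (L a) n ∂μ) (fun _ => y) = _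
  rw [ContinuousMultilinearMap.integral_apply
    (integrable_smul_expSeries_compContinuousLinearMap hg hL hLM n)]
  simp only [smul_apply, FormalMultilinearSeries.compContinuousLinearMap_apply, Function.comp_def,
    expSeries_apply_eq, smul_eq_mul]

theorem radius_integralExpSeries (hg : Integrable g μ) (hLM : ∀ᵐ a ∂μ, ‖L a‖ ≤ M) :
    (integralExpSeries μ g L).radius = ∞ := by
  refine FormalMultilinearSeries.radius_eq_top_of_summable_norm _ fun r => ?_
  have hbound (n : ℕ) : ‖integralExpSeries μ g L n‖ ≤ (∫ a, ‖g a‖ ∂μ) * (M ^ n / n !) := by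
    rw [← integral_mul_const]
    refine norm_integral_le_of_norm_le (hg.norm.mul_const _) (hLM.mono fun a ha => ?_)
    rw [norm_smul]
    gcongr
    exact (norm_expSeries_compContinuousLinearMap_le (L a) n).trans (by gcongr)
  refine ((Real.summable_pow_div_factorial (M * r)).mul_left (∫ a, ‖g a‖ ∂μ)).of_nonneg_of_le
    (fun n => by positivity) fun n => ?_
  calc ‖integralExpSeries μ g L n‖ * r ^ n ≤ (∫ a, ‖g a‖ ∂μ) * (M ^ n / n !) * r ^ n := by
        gcongr; exact hbound n
    _ = (∫ a, ‖g a‖ ∂μ) * ((M * r) ^ n / n !) := by ring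

theorem hasFPowerSeriesOnBall_integral_mul_exp (hg : Integrable g μ)
    (hL : AEStronglyMeasurable L μ) (hLM : ∀ᵐ a ∂μ, ‖L a‖ ≤ M) :
    HasFPowerSeriesOnBall (fun x => ∫ a, g a * Complex.exp (L a x) ∂μ)
      (integralExpSeries μ g L) 0 ∞ where
  r_le := (radius_integralExpSeries hg hLM).ge
  r_pos := ENNReal.zero_lt_top
  hasSum {y} _ := by
    set F : ℕ → α → ℂ := fun n a => g a * ((n !⁻¹ : ℝ) • L a y ^ n)
    have hfactor (n : ℕ) : ∀ᵐ a ∂μ, ‖(n !⁻¹ : ℝ) • L a y ^ n‖ ≤ (M * ‖y‖) ^ n / n ! :=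
      hLM.mono fun a ha => (norm_inv_factorial_smul_pow_apply_le (L a) y n).trans (by gcongr)
    have hLy : AEStronglyMeasurable (fun a => L a y) μ :=
      (ContinuousLinearMap.apply ℝ ℂ y).continuous.comp_aestronglyMeasurable hL
    have hF_int (n : ℕ) : Integrable (F n) μ :=
      hg.mul_bdd ((hLy.pow n).const_smul (n !⁻¹ : ℝ)) (hfactor n)
    have hF_sum : Summable fun n => ∫ a, ‖F n a‖ ∂μ := by
      refine ((Real.summable_pow_div_factorial (M * ‖y‖)).mul_left (∫ a, ‖g a‖ ∂μ)).of_nonneg_of_le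
        (fun n => integral_nonneg fun a => norm_nonneg _) fun n => ?_
      rw [← integral_mul_const]
      refine integral_mono_ae (hF_int n).norm (hg.norm.mul_const _)
        ((hfactor n).mono fun a ha => ?_)
      simp only [F, norm_mul]
      gcongr
    have hF_tsum (a : α) : ∑' n, F n a = g a * Complex.exp (L a y) := by
      rw [tsum_mul_left, Complex.exp_eq_exp_ℂ, (exp_series_hasSum_exp' (𝕂 := ℝ) (L a y)).tsum_eq]
    convert hasSum_integral_of_summable_integral_norm hF_int hF_sum using 1
    · exact funext fun n => integralExpSeries_apply hg hL hLM n y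
    · simp_rw [hF_tsum, zero_add]

theorem analyticOnNhd_integral_mul_exp (hg : Integrable g μ)
    (hL : AEStronglyMeasurable L μ) (hLM : ∀ᵐ a ∂μ, ‖L a‖ ≤ M) :
    AnalyticOnNhd ℝ (fun x => ∫ a, g a * Complex.exp (L a x) ∂μ) Set.univ := by
  simpa only [eball_top] using
    (hasFPowerSeriesOnBall_integral_mul_exp hg hL hLM).analyticOnNhd

end IntegralExp

noncomputable def sphereParam (p : ℝ × ℝ) : EuclideanSpace ℝ (Fin 3) :=
  !₂[cos p.1 * cos p.2, cos p.1 * sin p.2, sin p.1]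

theorem exists_eq_norm_smul_sphereParam (q : EuclideanSpace ℝ (Fin 3)) :
    ∃ p ∈ Set.Icc (-π, -π) (π, π), q = ‖q‖ • sphereParam p := by
  set z : ℂ := ⟨q 0, q 1⟩
  set w : ℂ := ⟨‖z‖, q 2⟩
  have hw : ‖w‖ = ‖q‖ := by
    refine (pow_left_inj₀ (norm_nonneg _) (norm_nonneg _) two_ne_zero).1 ?_
    rw [Complex.sq_norm, Complex.normSq_mk, ← sq, Complex.sq_norm, Complex.normSq_mk]
    simp only [EuclideanSpace.norm_sq_eq, Fin.sum_univ_three, Real.norm_eq_abs, sq_abs]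
    ring
  refine ⟨(w.arg, z.arg), ⟨⟨(Complex.neg_pi_lt_arg w).le, (Complex.neg_pi_lt_arg z).le⟩,
    Complex.arg_le_pi w, Complex.arg_le_pi z⟩, ?_⟩
  ext i
  fin_cases i <;>
    simp [sphereParam, ← hw, ← mul_assoc, Complex.norm_mul_cos_arg, Complex.norm_mul_sin_arg, w, z]

theorem contDiff_sphereParam : ContDiff ℝ 1 sphereParam :=
  contDiff_euclidean.2 fun i => by fin_cases i <;> simp [sphereParam] <;> fun_prop

theorem sphere_subset_image_sphereParam (x : EuclideanSpace ℝ (Fin 3)) (r : ℝ) :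
    sphere x r ⊆ (fun p => x + r • sphereParam p) '' Set.Icc (-π, -π) (π, π) := by
  intro q hq
  obtain ⟨p, hp, hqp⟩ := exists_eq_norm_smul_sphereParam (q - x)
  refine ⟨p, hp, ?_⟩
  dsimp only
  rw [← mem_sphere_iff_norm.1 hq, ← hqp, add_sub_cancel]

theorem hausdorffMeasure_sphere_lt_top (x : EuclideanSpace ℝ (Fin 3)) (r : ℝ) :
    μH[2] (sphere x r) < ∞ := by
  have hK : IsCompact (Set.Icc (-π, -π) (π, π)) := isCompact_Icc
  have hf : ContDiff ℝ 1 fun p => x + r • sphereParam p :=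
    contDiff_const.add (contDiff_sphereParam.const_smul r)
  obtain ⟨C, hC⟩ := hf.contDiffOn.exists_lipschitzOnWith one_ne_zero (convex_Icc _ _) hK
  calc μH[2] (sphere x r)
      ≤ μH[2] ((fun p => x + r • sphereParam p) '' Set.Icc (-π, -π) (π, π)) :=
        measure_mono (sphere_subset_image_sphereParam x r)
    _ ≤ C ^ (2 : ℝ) * μH[2] (Set.Icc (-π, -π) (π, π)) := hC.hausdorffMeasure_image_le zero_le_two
    _ < ∞ := by
      rw [hausdorffMeasure_prod_real]
      exact ENNReal.mul_lt_top (by simp) hK.measure_lt_top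

/-- The superposition of plane waves with directions on the unit sphere `S² ⊆ ℝ³`,
`u(r) = ∫_{S²} f(q) e^{i k ⟪q,r⟫} dσ(q)` (with `σ` the surface measure, i.e. the two-dimensional
Hausdorff measure on the sphere), is real-analytic on all of `ℝ³`; consequently, if it vanishes
on a nonempty open set then it vanishes identically. -/
theorem herglotz_wave_analytic
    (k : ℝ) (f : EuclideanSpace ℝ (Fin 3) → ℂ)
    (hf : ContinuousOn f (Metric.sphere (0 : EuclideanSpace ℝ (Fin 3)) 1))
    (u : EuclideanSpace ℝ (Fin 3) → ℂ)
    (hu : ∀ r : EuclideanSpace ℝ (Fin 3),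
      u r = ∫ q in Metric.sphere (0 : EuclideanSpace ℝ (Fin 3)) 1,
        f q * Complex.exp (Complex.I * (k : ℂ) * (⟪q, r⟫ : ℝ)) ∂(μH[2])) :
    AnalyticOnNhd ℝ u Set.univ ∧
      ∀ U : Set (EuclideanSpace ℝ (Fin 3)), IsOpen U → U.Nonempty →
        (∀ r ∈ U, u r = 0) → ∀ r : EuclideanSpace ℝ (Fin 3), u r = 0 := by
  set S := sphere (0 : EuclideanSpace ℝ (Fin 3)) 1
  have hf_int : IntegrableOn f S μH[2] :=
    hf.integrableOn_of_subset_isCompact (isCompact_sphere 0 1) isClosed_sphere.measurableSet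
      subset_rfl (hausdorffMeasure_sphere_lt_top 0 1).ne
  set L : EuclideanSpace ℝ (Fin 3) → EuclideanSpace ℝ (Fin 3) →L[ℝ] ℂ :=
    fun q => (Complex.I * k) • Complex.ofRealCLM.comp (innerSL ℝ q)
  have hL : ∀ q ∈ S, ‖L q‖ ≤ |k| := fun q hq => by
    calc ‖L q‖ ≤ ‖Complex.I * k‖ * (‖Complex.ofRealCLM‖ * ‖innerSL ℝ q‖) := by
          refine (norm_smul_le (Complex.I * k) (Complex.ofRealCLM.comp (innerSL ℝ q))).trans ?_
          gcongr
          exact ContinuousLinearMap.opNorm_comp_le _ _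
      _ = |k| := by simp [mem_sphere_zero_iff_norm.1 hq]
  have hu_eq : u = fun r => ∫ q, f q * Complex.exp (L q r) ∂(μH[2].restrict S) := by
    funext r
    simp [hu, L, mul_assoc]
  have hanalytic : AnalyticOnNhd ℝ u Set.univ := hu_eq ▸ analyticOnNhd_integral_mul_exp hf_int
    (by fun_prop : Continuous L).aestronglyMeasurable
    ((ae_restrict_iff' isClosed_sphere.measurableSet).2 (ae_of_all _ hL))
  refine ⟨hanalytic, fun U hU ⟨r₀, hr₀⟩ hvanish r => ?_⟩
  exact hanalytic.eqOn_zero_of_preconnected_of_eventuallyEq_zero isPreconnected_univ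
    (Set.mem_univ r₀) (Filter.eventually_of_mem (hU.mem_nhds hr₀) hvanish) (Set.mem_univ r)
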